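/- For every propositional formula φ, φ is classically equivalent to the conjunction of the set φ* of all consequences of φ written only in essential atoms of φ; moreover, for every formula φ' classically equivalent to φ, the set of atoms occurring in members of φ* is contained in the set of atoms occurring in φ'. -/

import Mathlib

inductive Fml (α : Type) : Type
  | atom : α → Fml α
  | top : Fml α
  | bot : Fml α
  | neg : Fml α → Fml α
  | and : Fml α → Fml α → Fml α
  | or : Fml α → Fml α → Fml α

def Fml.eval {α : Type} (v : α → Bool) : Fml α → Bool
  | .atom p => v p
  | .top => true
  | .bot => false
  | .neg φ => !(Fml.eval v φ)
  | .and φ ψ => Fml.eval v φ && Fml.eval v ψ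
  | .or φ ψ => Fml.eval v φ || Fml.eval v ψ

/-- The set of atoms actually occurring in a formula. -/
def Fml.atoms {α : Type} : Fml α → Set α
  | .atom p => {p}
  | .top => ∅
  | .bot => ∅
  | .neg φ => Fml.atoms φ
  | .and φ ψ => Fml.atoms φ ∪ Fml.atoms ψ
  | .or φ ψ => Fml.atoms φ ∪ Fml.atoms ψ

/-- Classical (propositional) entailment. -/
def Fml.entails {α : Type} (φ ψ : Fml α) : Prop :=
  ∀ v : α → Bool, Fml.eval v φ = true → Fml.eval v ψ = true

/-- Classical equivalence. -/
def Fml.equiv {α : Type} (φ ψ : Fml α) : Prop :=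
  ∀ v : α → Bool, Fml.eval v φ = Fml.eval v ψ

/-- An atom is essential to `φ` iff it occurs in every formula classically equivalent to `φ`. -/
def essential {α : Type} (p : α) (φ : Fml α) : Prop :=
  ∀ ψ : Fml α, Fml.equiv φ ψ → p ∈ Fml.atoms ψ

/-- `φ* `: all classical consequences of `φ` written only in essential atoms of `φ`. -/
def star {α : Type} (φ : Fml α) : Set (Fml α) :=
  {ψ | Fml.entails φ ψ ∧ Fml.atoms ψ ⊆ {p | essential p φ}}


/-!
A formula's truth value is unchanged when a single inessential atom is flipped, since some
equivalent formula does not mention it; flipping the inessential atoms of `φ` one at a time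
shows that the value of `φ` depends only on its essential atoms. So if `v` falsifies `φ`, the
negated conjunction of the literals that `v` gives the (finitely many) essential atoms is a
member of `φ*` that `v` falsifies.
-/

namespace Fml

variable {α : Type}

theorem eval_congr (φ : Fml α) {v w : α → Bool} (h : ∀ p ∈ φ.atoms, v p = w p) :
    φ.eval v = φ.eval w := by
  induction φ with
  | atom q => exact h q rfl
  | top | bot => rfl
  | neg φ ih => simp only [eval, ih h]
  | and φ ψ ih₁ ih₂ | or φ ψ ih₁ ih₂ =>
    simp only [eval, ih₁ fun p hp => h p (Or.inl hp), ih₂ fun p hp => h p (Or.inr hp)]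

theorem atoms_finite (φ : Fml α) : φ.atoms.Finite := by
  induction φ with
  | atom q => exact Set.finite_singleton q
  | top | bot => exact Set.finite_empty
  | neg φ ih => exact ih
  | and φ ψ ih₁ ih₂ | or φ ψ ih₁ ih₂ => exact ih₁.union ih₂

theorem setOf_essential_subset_atoms (φ : Fml α) : {p | essential p φ} ⊆ φ.atoms :=
  fun _ hp => hp φ fun _ => rfl

theorem eval_update_of_not_essential [DecidableEq α] {φ : Fml α} {p : α}
    (hp : ¬essential p φ) (v : α → Bool) (b : Bool) :
    φ.eval (Function.update v p b) = φ.eval v := by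
  obtain ⟨ψ, hψ, hpψ⟩ : ∃ ψ, φ.equiv ψ ∧ p ∉ ψ.atoms := by
    simpa [essential] using hp
  rw [hψ, hψ]
  exact ψ.eval_congr fun q hq => Function.update_of_ne (ne_of_mem_of_not_mem hq hpψ) b v

theorem eval_congr_essential (φ : Fml α) {v w : α → Bool}
    (h : ∀ p, essential p φ → v p = w p) : φ.eval v = φ.eval w := by
  classical
  have key : ∀ s : Finset α, φ.eval v = φ.eval (s.piecewise w v) := by
    intro s
    induction s using Finset.induction_on with
    | empty => rw [Finset.piecewise_empty]
    | insert a s ha ih =>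
      rw [Finset.piecewise_insert, ih]
      by_cases hess : essential a φ
      · rw [← h a hess, ← Finset.piecewise_eq_of_notMem s w v ha, Function.update_eq_self]
      · exact (eval_update_of_not_essential hess _ _).symm
  rw [key φ.atoms_finite.toFinset]
  exact φ.eval_congr fun p hp => Finset.piecewise_eq_of_mem _ _ _ (by simpa using hp)

def conjLiterals (v : α → Bool) : List α → Fml α
  | [] => .top
  | p :: L => .and (if v p then .atom p else .neg (.atom p)) (conjLiterals v L)

theorem eval_conjLiterals (v w : α → Bool) (L : List α) :
    (conjLiterals v L).eval w = true ↔ ∀ p ∈ L, w p = v p := by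
  induction L with
  | nil => simp [conjLiterals, eval]
  | cons q L ih => cases hq : v q <;> simp [conjLiterals, eval, hq, ih]

theorem atoms_conjLiterals_subset (v : α → Bool) (L : List α) :
    (conjLiterals v L).atoms ⊆ {p | p ∈ L} := by
  induction L with
  | nil => simp [conjLiterals, atoms]
  | cons q L ih =>
    rintro p (hp | hp)
    · cases hq : v q <;> simp_all [atoms]
    · exact List.mem_cons_of_mem _ (ih hp)

theorem exists_mem_star_eval_false {φ : Fml α} {v : α → Bool} (hv : φ.eval v = false) :
    ∃ ψ ∈ star φ, ψ.eval v = false := by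
  have hfin := φ.atoms_finite.subset φ.setOf_essential_subset_atoms
  set L := hfin.toFinset.toList
  have hL : ∀ p, p ∈ L ↔ essential p φ := by simp [L]
  refine ⟨.neg (conjLiterals v L), ⟨fun w hw => ?_, fun p hp => (hL p).1 ?_⟩, ?_⟩
  · have : (conjLiterals v L).eval w = false := Bool.eq_false_iff.2 fun hc => by
      have := φ.eval_congr_essential fun p hp => (eval_conjLiterals v w L).1 hc p ((hL p).2 hp)
      simp [hw, hv] at this
    simp [eval, this]
  · exact atoms_conjLiterals_subset v L hp
  · simp [eval, (eval_conjLiterals v v L).2 fun _ _ => rfl]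

end Fml

/-- Least atom-set theorem: `φ` is classically equivalent to the conjunction of `φ*`, and
for every `φ'` classically equivalent to `φ`, the atoms occurring in members of `φ*` are
contained in the atoms of `φ'`. -/
theorem least_atom_set {α : Type} (φ : Fml α) :
    (∀ v : α → Bool, Fml.eval v φ = true ↔ ∀ ψ ∈ star φ, Fml.eval v ψ = true) ∧
    (∀ φ' : Fml α, Fml.equiv φ φ' → (⋃ ψ ∈ star φ, Fml.atoms ψ) ⊆ Fml.atoms φ') := by
  refine ⟨fun v => ⟨fun hv ψ hψ => hψ.1 v hv, fun hall => ?_⟩, fun φ' hequiv => ?_⟩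
  · by_contra hv
    obtain ⟨ψ, hψ, hψv⟩ := Fml.exists_mem_star_eval_false (Bool.eq_false_iff.2 hv)
    simp [hall ψ hψ] at hψv
  · exact Set.iUnion₂_subset fun ψ hψ p hp => hψ.2 hp φ' hequiv
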